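/- arXiv:1301.7603 — 2 statements merged into one kernel-verified Lean document; each statement's English description precedes it below -/
import Mathlib

section
/- Let V be a vertex algebra, (W, Y_W) a quasi V-module at infinity, and u, v ∈ V. If p(x₁,x₂) is ANY nonzero polynomial such that p(x₁,x₂)Y_W(u,x₁)Y_W(v,x₂) ∈ Hom(W, W((x₁⁻¹,x₂⁻¹))), then the weak associativity relation (p(x₁,x₂)Y_W(u,x₁)Y_W(v,x₂))|_{x₁=x₂+x₀} = p(x₀+x₂,x₂) Y_W(Y(u,x₀)v, x₂) holds for that polynomial p. -/
open MvPolynomial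

noncomputable section

/-- Generalized binomial coefficient `C(n, k)` for `n : ℤ`, as a complex number. -/
def zchoose (n : ℤ) (k : ℕ) : ℂ :=
  (∏ j ∈ Finset.range k, ((n : ℂ) - (j : ℂ))) / (Nat.factorial k : ℂ)

section TwoVar

variable {W : Type} [AddCommGroup W] [Module ℂ W]

/-- For a two-variable formal series `Σ F m n x₁^{-m-1} x₂^{-n-1}` with coefficients in a
ℂ-module, this is the coefficient of `x₁^{-m-1} x₂^{-n-1}` in its product with the
polynomial `p(x₁,x₂)`. -/
def polyMul (p : MvPolynomial (Fin 2) ℂ) (F : ℤ → ℤ → W) (m n : ℤ) : W :=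
  ∑ᶠ d : Fin 2 →₀ ℕ, p.coeff d • F (m + d 0) (n + d 1)

/-- For `A(x₁,x₂) = Σ F m n x₁^{-m-1} x₂^{-n-1}`, the coefficient of `x₀^{-k-1} x₂^{-l-1}`
in the substitution `A(x₂+x₀, x₂)`, where `(x₂+x₀)^{-m-1}` is expanded in nonnegative
powers of `x₀`.  It is nonzero only for `k < 0` (nonnegative powers of `x₀`). -/
def substX1 (F : ℤ → ℤ → W) (k l : ℤ) : W :=
  if k < 0 then ∑ᶠ m : ℤ, zchoose (-m-1) (-k-1).toNat • F m (l - m + k) else 0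

/-- `p(x₀+x₂, x₂)` as a polynomial in the variables `(x₀, x₂)`, for `p` a polynomial in
variables `(x₁, x₂)`. -/
def substPoly (p : MvPolynomial (Fin 2) ℂ) : MvPolynomial (Fin 2) ℂ :=
  MvPolynomial.aeval ![X 0 + X 1, X 1] p

end TwoVar

section Eo

variable {W : Type} [AddCommGroup W] [Module ℂ W]

/-- The identity operator `1_W`, viewed as the element `1_W x^0` of `ℰᵒ(W)`;
its coefficient at `x^{-n-1}` is `1` iff `n = -1`. -/
def idSeries : ℤ → Module.End ℂ W := fun n => if n = -1 then 1 else 0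

/-- `a(x) = Σ aₙ x^{-n-1}` lies in `ℰᵒ(W) = Hom(W, W((x⁻¹)))`:  for each `w`, the
coefficients `aₙ w` vanish for `n` sufficiently negative (finitely many positive
powers of `x`). -/
def IsEo (a : ℤ → Module.End ℂ W) : Prop := ∀ w : W, ∃ N : ℤ, ∀ n < N, a n w = 0

/-- `p(x₁,x₂) a(x₁) b(x₂) ∈ Hom(W, W((x₁⁻¹, x₂⁻¹)))`. -/
def Compat (p : MvPolynomial (Fin 2) ℂ) (a b : ℤ → Module.End ℂ W) : Prop :=
  ∀ w : W, ∃ N : ℤ, ∀ m n : ℤ, (m < N ∨ n < N) →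
    polyMul p (fun m n => a m (b n w)) m n = 0

/-- Weak associativity for the polynomial `p`:
`(p(x₁,x₂) a(x₁) b(x₂))|_{x₁ = x₂+x₀} = p(x₀+x₂,x₂) ⬝ Σ_{k,l} c k l x₀^{-k-1} x₂^{-l-1}`. -/
def AssocEq (p : MvPolynomial (Fin 2) ℂ) (a b : ℤ → Module.End ℂ W)
    (c : ℤ → ℤ → Module.End ℂ W) : Prop :=
  ∀ (w : W) (k l : ℤ),
    substX1 (polyMul p (fun m n => a m (b n w))) k l
      = polyMul (substPoly p) (fun k l => c k l w) k l

/-- `c` is the family of products `Y_{ℰᵒ}(a(x),x₀)b(x) = Σ_n (a(x)_n b(x)) x₀^{-n-1}`: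
`c n l` is the coefficient of `x^{-l-1}` in `a(x)_n b(x)`.  It is characterized by:
truncation in `x₀`, each `a(x)_n b(x) ∈ ℰᵒ(W)`, and for every nonzero compatible
polynomial `p`, `p(x+x₀,x) Y_{ℰᵒ}(a(x),x₀)b(x) = (p(x₁,x)a(x₁)b(x))|_{x₁=x+x₀}`. -/
def IsYEoProd (a b : ℤ → Module.End ℂ W) (c : ℤ → ℤ → Module.End ℂ W) : Prop :=
  (∀ w : W, ∃ N : ℤ, ∀ n : ℤ, N ≤ n → ∀ l : ℤ, c n l w = 0) ∧
  (∀ (w : W) (n : ℤ), ∃ M : ℤ, ∀ l < M, c n l w = 0) ∧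
  ∀ p : MvPolynomial (Fin 2) ℂ, p ≠ 0 → Compat p a b →
    ∀ (w : W) (k l : ℤ),
      polyMul (substPoly p) (fun n l => c n l w) k l
        = substX1 (polyMul p (fun m n => a m (b n w))) k l

end Eo

/-- A vertex algebra over ℂ, with vertex operator map `Y(v,x) = Σ_n (Y v n) x^{-n-1}`,
vacuum `one`, truncation, vacuum and creation properties, and the Jacobi identity in
component form. -/
structure VertexAlg (V : Type) [AddCommGroup V] [Module ℂ V] where
  Y : V →ₗ[ℂ] (ℤ → Module.End ℂ V)
  one : V
  trunc : ∀ u v : V, ∃ N : ℤ, ∀ n : ℤ, N ≤ n → Y u n v = 0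
  vacuum : ∀ n : ℤ, Y one n = if n = -1 then 1 else 0
  creation_neg : ∀ v : V, Y v (-1) one = v
  creation : ∀ v : V, ∀ n : ℤ, 0 ≤ n → Y v n one = 0
  jacobi : ∀ u v w : V, ∀ m n k : ℤ,
    (∑ᶠ i : ℕ, ((-1:ℂ)^i * zchoose k i) • Y u (m + k - i) (Y v (n + i) w))
      - (-1:ℂ)^k • (∑ᶠ i : ℕ, ((-1:ℂ)^i * zchoose k i) • Y v (n + k - i) (Y u (m + i) w))
    = ∑ᶠ i : ℕ, zchoose m i • Y (Y u (k + i) v) (m + n - i) w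

/-- A quasi module at infinity for a vertex algebra `VA` on `V`:  a linear map
`Y_W : V → ℰᵒ(W)` with `Y_W(𝟏,x) = 1_W`, such that for any `u,v` there is a nonzero
polynomial `p(x₁,x₂)` with `p(x₁,x₂)Y_W(u,x₁)Y_W(v,x₂) ∈ Hom(W,W((x₁⁻¹,x₂⁻¹)))` and
`(p(x₁,x₂)Y_W(u,x₁)Y_W(v,x₂))|_{x₁=x₂+x₀} = p(x₀+x₂,x₂)Y_W(Y(u,x₀)v,x₂)`. -/
structure QModInf {V : Type} [AddCommGroup V] [Module ℂ V] (VA : VertexAlg V)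
    (W : Type) [AddCommGroup W] [Module ℂ W] where
  Y : V →ₗ[ℂ] (ℤ → Module.End ℂ W)
  trunc : ∀ (v : V) (w : W), ∃ N : ℤ, ∀ n < N, Y v n w = 0
  vacuum : ∀ n : ℤ, Y VA.one n = if n = -1 then 1 else 0
  weak_assoc : ∀ u v : V, ∃ p : MvPolynomial (Fin 2) ℂ, p ≠ 0 ∧
    Compat p (Y u) (Y v) ∧ AssocEq p (Y u) (Y v) (fun k l => Y (VA.Y u k v) l)

section Delta

variable {W : Type} [AddCommGroup W] [Module ℂ W]

/-- The coefficient of `x₁^{a} x₂^{b}` in `(1/j!) (∂/∂x₂)^j x₁⁻¹ δ(g(x₂)/x₁)` for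
`g(x) = αx+β`, where `g(x₂)^n` is expanded in `ℂ((x₂⁻¹))`. -/
def deltaDCoeff (α β : ℂ) (j : ℕ) (a b : ℤ) : ℂ :=
  if 0 ≤ -a - 1 - j - b then
    zchoose (-a-1) (-a-1-j-b).toNat * α ^ (b + j) * β ^ (-a-1-j-b).toNat
      * zchoose (b + j) j
  else 0

/-- The coefficient of `x₁^{-m-1} x₂^{-n-1}` in
`A(x₂) ⬝ (1/j!) (∂/∂x₂)^j x₁⁻¹ δ(g(x₂)/x₁)` (with `g(x) = αx+β`), applied to `w`. -/
def mulDeltaD (A : ℤ → Module.End ℂ W) (α β : ℂ) (j : ℕ) (m n : ℤ) (w : W) : W :=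
  ∑ᶠ l : ℤ, deltaDCoeff α β j (-m-1) (l - n) • A l w

/-- The coefficient of `x^{-l-1}` in `(αx+β)^{-n-1}`, expanded in `ℂ((x⁻¹))`; so for
`a(x) ∈ ℰᵒ(W)` and `g(x) = αx+β ∈ G`, the coefficient of `x^{-l-1}` in `a(g(x))` is
`Σ_n gcoeff α β l n • aₙ`. -/
def gcoeff (α β : ℂ) (l n : ℤ) : ℂ :=
  if 0 ≤ l - n then zchoose (-n-1) (l-n).toNat * α ^ (-l-1) * β ^ (l-n).toNat else 0

end Delta

/-- A group homomorphism `Ψ : Γ → G`, where `G` is the group (under composition) of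
linear polynomials `g(x) = αx + β` with `α ∈ ℂˣ, β ∈ ℂ`; encoded by
`Ψ(g)(x) = (A g) x + B g`. -/
structure HomToG (Γ : Type) [Group Γ] where
  A : Γ →* ℂˣ
  B : Γ → ℂ
  B_one : B 1 = 0
  B_mul : ∀ g h : Γ, B (g * h) = (A g : ℂ) * B h + B g

namespace HomToG

variable {Γ : Type} [Group Γ]

/-- The leading coefficient of `Ψ(g)⁻¹(x) = α⁻¹ x - α⁻¹ β`. -/
def invA (Ψ : HomToG Γ) (g : Γ) : ℂ := (Ψ.A g : ℂ)⁻¹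

/-- The constant coefficient of `Ψ(g)⁻¹(x) = α⁻¹ x - α⁻¹ β`. -/
def invB (Ψ : HomToG Γ) (g : Γ) : ℂ := -((Ψ.A g : ℂ)⁻¹) * Ψ.B g

end HomToG

/-- The polynomial `∏_{σ ∈ s} (x₁ - Ψ(σ)(x₂))`, a product of linear factors
`x₁ - g(x₂)` with `g ∈ Ψ(Γ)` (with multiplicities). -/
def gpoly {Γ : Type} [Group Γ] (Ψ : HomToG Γ) (s : Multiset Γ) :
    MvPolynomial (Fin 2) ℂ :=
  (s.map fun σ => X 0 - (C ((Ψ.A σ : ℂ)) * X 1 + C (Ψ.B σ))).prod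

/-- A vertex `Γ`-algebra: a vertex algebra `V` equipped with group homomorphisms
`L : Γ → GL(V)` and `φ : Γ → ℂˣ` such that `L(g)𝟏 = 𝟏` and
`L(g)Y(u,x)v = Y(L(g)u, φ(g)x) L(g)v`. -/
structure VertexGammaAlg (Γ : Type) [Group Γ] (V : Type) [AddCommGroup V]
    [Module ℂ V] extends VertexAlg V where
  L : Γ →* (V ≃ₗ[ℂ] V)
  phi : Γ →* ℂˣ
  L_vac : ∀ g : Γ, L g one = one
  L_Y : ∀ (g : Γ) (u v : V) (n : ℤ),
    L g (Y u n v) = ((phi g : ℂ) ^ (-n-1 : ℤ)) • Y (L g u) n (L g v)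

/-- A quasi module at infinity for a vertex `Γ`-algebra `GV`: a quasi module at
infinity for the underlying vertex algebra, together with a group homomorphism
`Ψ : Γ → G` with `Φ ∘ Ψ = φ`, satisfying the covariance
`Y_W(L(g)v, x) = Y_W(v, Ψ(g)⁻¹(x))` and `Ψ(Γ)`-locality. -/
structure GQModInf (Γ : Type) [Group Γ] {V : Type} [AddCommGroup V] [Module ℂ V]
    (GV : VertexGammaAlg Γ V) (W : Type) [AddCommGroup W] [Module ℂ W]
    extends QModInf GV.toVertexAlg W where
  Psi : HomToG Γ
  phi_eq : Psi.A = GV.phi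
  covariance : ∀ (g : Γ) (v : V) (l : ℤ) (w : W),
    Y (GV.L g v) l w = ∑ᶠ n : ℤ, gcoeff (Psi.invA g) (Psi.invB g) l n • Y v n w
  gammaLocal : ∀ u v : V, ∃ s : Multiset Γ, ∀ m n : ℤ,
    polyMul (gpoly Psi s) (fun m n => Y u m * Y v n - Y v n * Y u m) m n = 0

section LieInf

/-- The coefficient of `t^i` in `(αt+β)^m`, expanded in `ℂ((t⁻¹))`. -/
def gco (α β : ℂ) (m i : ℤ) : ℂ :=
  if 0 ≤ m - i then zchoose m (m-i).toNat * α ^ i * β ^ (m-i).toNat else 0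

/-- `p = Σ pₙ tⁿ` lies in `ℂ((t⁻¹))`: upper truncated in `t`. -/
def KTrunc (p : ℤ → ℂ) : Prop := ∃ N : ℤ, ∀ n : ℤ, N < n → p n = 0

/-- The coefficients of `p(αt+β)` for `p = Σ pₘ tᵐ ∈ ℂ((t⁻¹))`. -/
def substK (α β : ℂ) (p : ℤ → ℂ) : ℤ → ℂ := fun i => ∑ᶠ m : ℤ, gco α β m i * p m

variable {𝔤 : Type} [LieRing 𝔤] [LieAlgebra ℂ 𝔤]

/-- The element `a ⊗ p(t)` of `ĝ(∞) = (𝔤 ⊗ ℂ((t⁻¹))) ⊕ ℂk`, realized inside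
`(ℤ → 𝔤) × ℂ` via coefficient functions: the `t^n`-coefficient is `p n • a`. -/
def elemT (a : 𝔤) (p : ℤ → ℂ) : (ℤ → 𝔤) × ℂ := (fun n => p n • a, 0)

/-- The central element `k`. -/
def kvec {𝔤 : Type} [LieRing 𝔤] [LieAlgebra ℂ 𝔤] : (ℤ → 𝔤) × ℂ := (0, 1)

/-- The coefficient function of `tⁿ ∈ ℂ((t⁻¹))`. -/
def tpow (n : ℤ) : ℤ → ℂ := fun m => if m = n then 1 else 0

/-- `ĝ(∞) = (𝔤 ⊗ ℂ((t⁻¹))) ⊕ ℂ k`, realized as the span of the elements `a ⊗ p(t)`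
(`p` truncated) and `k` inside `(ℤ → 𝔤) × ℂ`. -/
def Ehat (𝔤 : Type) [LieRing 𝔤] [LieAlgebra ℂ 𝔤] : Submodule ℂ ((ℤ → 𝔤) × ℂ) :=
  Submodule.span ℂ ({x | ∃ (a : 𝔤) (p : ℤ → ℂ), KTrunc p ∧ x = elemT a p} ∪ {kvec})

lemma elemT_mem (a : 𝔤) (p : ℤ → ℂ) (hp : KTrunc p) : elemT a p ∈ Ehat 𝔤 :=
  Submodule.subset_span (Or.inl ⟨a, p, hp, rfl⟩)

lemma kvec_mem : (kvec : (ℤ → 𝔤) × ℂ) ∈ Ehat 𝔤 :=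
  Submodule.subset_span (Or.inr rfl)

lemma tpow_trunc (n : ℤ) : KTrunc (tpow n) := ⟨n, fun m hm => if_neg (by omega)⟩

variable {Γ : Type} [Group Γ]

/-- The twisted bracket `[·,·]_Γ` on `ĝ(∞)`, given on generators by
`[a⊗p(t), b⊗q(t)]_Γ = Σ_{g∈Γ} [ga,b] ⊗ p(g⁻¹(t))q(t)
   + Res_t q(t) (d/dt)p(g⁻¹(t)) ⟨ga,b⟩ k`, and `k` central. -/
def brG (ρ : Γ →* (𝔤 ≃ₗ[ℂ] 𝔤)) (Ψ : HomToG Γ) (Bf : 𝔤 →ₗ[ℂ] 𝔤 →ₗ[ℂ] ℂ)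
    (x y : (ℤ → 𝔤) × ℂ) : (ℤ → 𝔤) × ℂ :=
  (fun n => ∑ᶠ q : Γ × ℤ × ℤ,
      gco (Ψ.invA q.1) (Ψ.invB q.1) q.2.1 (n - q.2.2) • ⁅ρ q.1 (x.1 q.2.1), y.1 q.2.2⁆,
   ∑ᶠ q : Γ × ℤ × ℤ,
      (-(q.2.2 : ℂ)) * gco (Ψ.invA q.1) (Ψ.invB q.1) q.2.1 (-q.2.2)
        * Bf (ρ q.1 (x.1 q.2.1)) (y.1 q.2.2))

/-- The subspace of `ĝ(∞)` linearly spanned by the elements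
`g a ⊗ p(t) - a ⊗ p(g(t))` for `g ∈ Γ`, `a ∈ 𝔤`, `p(t) ∈ ℂ((t⁻¹))`. -/
def Sgen (ρ : Γ →* (𝔤 ≃ₗ[ℂ] 𝔤)) (Ψ : HomToG Γ) : Submodule ℂ ((ℤ → 𝔤) × ℂ) :=
  Submodule.span ℂ {x | ∃ (g : Γ) (a : 𝔤) (p : ℤ → ℂ), KTrunc p ∧
    x = elemT (ρ g a) p - elemT a (substK ((Ψ.A g : ℂ)) (Ψ.B g) p)}

/-- The untwisted bracket of the affine-type Lie algebra `ĝ(∞)`: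
`[a⊗p(t), b⊗q(t)] = [a,b] ⊗ p(t)q(t) + Res_t p'(t)q(t) ⟨a,b⟩ k`, `k` central. -/
def br0 (Bf : 𝔤 →ₗ[ℂ] 𝔤 →ₗ[ℂ] ℂ) (x y : (ℤ → 𝔤) × ℂ) : (ℤ → 𝔤) × ℂ :=
  (fun n => ∑ᶠ i : ℤ, ⁅x.1 i, y.1 (n - i)⁆,
   ∑ᶠ i : ℤ, (i : ℂ) * Bf (x.1 i) (y.1 (-i)))

/-- The action of `g ∈ Γ` on `ĝ(∞)`: `g ⬝ (a ⊗ p(t) + λk) = ga ⊗ p(g⁻¹(t)) + λk`. -/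
def actG (ρ : Γ →* (𝔤 ≃ₗ[ℂ] 𝔤)) (Ψ : HomToG Γ) (g : Γ) (x : (ℤ → 𝔤) × ℂ) :
    (ℤ → 𝔤) × ℂ :=
  (fun n => ∑ᶠ m : ℤ, gco (Ψ.invA g) (Ψ.invB g) m n • (ρ g (x.1 m)), x.2)

end LieInf

/-!
Let `q` be the polynomial supplied by the definition of a quasi module at infinity and put
`D(x₀,x₂) = (p(x₁,x₂)Y_W(u,x₁)Y_W(v,x₂))|_{x₁=x₂+x₀} - p(x₀+x₂,x₂)Y_W(Y(u,x₀)v,x₂)`.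
On `Hom(W, W((x₁⁻¹,x₂⁻¹)))` the substitution `x₁ = x₂+x₀` turns multiplication by a polynomial
`r(x₁,x₂)` into multiplication by `r(x₀+x₂,x₂)`. Since both `pY_WY_W` and `qY_WY_W` lie in that
space, weak associativity for `q` gives
`q(x₀+x₂,x₂)D = p(x₀+x₂,x₂)((qY_WY_W)|_{x₁=x₂+x₀} - q(x₀+x₂,x₂)Y_W(Y(u,x₀)v,x₂)) = 0`.
Finally `D` lies in `W((x₂⁻¹))((x₀))`, where multiplication by the nonzero polynomial
`q(x₀+x₂,x₂)` is injective: its lexicographically leading term meets that of `D`.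
-/

open Filter

lemma zchoose_eq_ringChoose (n : ℤ) (k : ℕ) : zchoose n k = Ring.choose (n : ℂ) k := by
  have hk : (k.factorial : ℂ) ≠ 0 := by exact_mod_cast k.factorial_ne_zero
  rw [zchoose, div_eq_iff hk, ← descPochhammer_eval_eq_prod_range, mul_comm, ← nsmul_eq_mul,
    ← Ring.descPochhammer_eq_factorial_smul_choose, ← Polynomial.aeval_eq_smeval,
    Polynomial.aeval_def, Polynomial.eval₂_eq_eval_map, descPochhammer_map]

lemma zchoose_zero_right (n : ℤ) : zchoose n 0 = 1 := by
  rw [zchoose_eq_ringChoose, Ring.choose_zero_right]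

lemma zchoose_succ_succ (n : ℤ) (k : ℕ) :
    zchoose (n + 1) (k + 1) = zchoose n k + zchoose n (k + 1) := by
  simp only [zchoose_eq_ringChoose, Int.cast_add, Int.cast_one, Ring.choose_succ_succ]

lemma fin_two_eq_zero_or_one (i : Fin 2) : i = 0 ∨ i = 1 := by
  fin_cases i <;> simp

section Series

variable {W : Type} [AddCommGroup W] [Module ℂ W]

lemma polyMul_eq_sum (p : MvPolynomial (Fin 2) ℂ) (F : ℤ → ℤ → W) (m n : ℤ)
    {S : Finset (Fin 2 →₀ ℕ)} (hS : p.support ⊆ S) :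
    polyMul p F m n = ∑ d ∈ S, p.coeff d • F (m + d 0) (n + d 1) := by
  refine finsum_eq_finsetSum_of_support_subset _ fun d hd => by_contra fun hdS => ?_
  have hd0 : p.coeff d = 0 := notMem_support_iff.mp fun h => hdS (hS h)
  simp [hd0] at hd

lemma polyMul_C (a : ℂ) (F : ℤ → ℤ → W) : polyMul (C a) F = a • F := by
  classical
  ext m n
  rw [polyMul_eq_sum _ F m n (S := {0}) (by rw [support_C]; split_ifs <;> simp)]
  simp

lemma polyMul_add_left (p q : MvPolynomial (Fin 2) ℂ) (F : ℤ → ℤ → W) :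
    polyMul (p + q) F = polyMul p F + polyMul q F := by
  ext m n
  rw [Pi.add_apply, Pi.add_apply, polyMul_eq_sum _ F m n support_add,
    polyMul_eq_sum p F m n Finset.subset_union_left,
    polyMul_eq_sum q F m n Finset.subset_union_right, ← Finset.sum_add_distrib]
  simp only [coeff_add, add_smul]

lemma polyMul_sub_right (p : MvPolynomial (Fin 2) ℂ) (F G : ℤ → ℤ → W) :
    polyMul p (F - G) = polyMul p F - polyMul p G := by
  ext m n
  simp only [Pi.sub_apply, polyMul_eq_sum p _ m n subset_rfl, smul_sub, Finset.sum_sub_distrib]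

lemma polyMul_mul_X (p : MvPolynomial (Fin 2) ℂ) (i : Fin 2) (F : ℤ → ℤ → W) (m n : ℤ) :
    polyMul (p * X i) F m n
      = polyMul p F (m + (Finsupp.single i 1 : Fin 2 →₀ ℕ) 0)
          (n + (Finsupp.single i 1 : Fin 2 →₀ ℕ) 1) := by
  have hsupp : (p * X i).support ⊆ p.support.map (addRightEmbedding (Finsupp.single i 1)) := by
    intro d hd
    rw [mem_support_iff, coeff_mul_X'] at hd
    split_ifs at hd with hi
    · refine Finset.mem_map.mpr ⟨d - Finsupp.single i 1, mem_support_iff.mpr hd, ?_⟩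
      exact tsub_add_cancel_of_le (Finsupp.single_le_iff.mpr (Nat.one_le_iff_ne_zero.mpr
        (Finsupp.mem_support_iff.mp hi)))
    · exact absurd rfl hd
  rw [polyMul_eq_sum _ F m n hsupp, Finset.sum_map, polyMul_eq_sum p F _ _ subset_rfl]
  refine Finset.sum_congr rfl fun d _ => ?_
  simp only [addRightEmbedding_apply, coeff_mul_X, Finsupp.add_apply]
  congr 2 <;> push_cast <;> ring

lemma polyMul_mul_X_zero (p : MvPolynomial (Fin 2) ℂ) (F : ℤ → ℤ → W) :
    polyMul (p * X 0) F = fun m n => polyMul p F (m + 1) n := by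
  ext m n
  simp [polyMul_mul_X]

lemma polyMul_mul_X_one (p : MvPolynomial (Fin 2) ℂ) (F : ℤ → ℤ → W) :
    polyMul (p * X 1) F = fun m n => polyMul p F m (n + 1) := by
  ext m n
  simp [polyMul_mul_X]

lemma polyMul_polyMul_eq_sum (p q : MvPolynomial (Fin 2) ℂ) (F : ℤ → ℤ → W) (m n : ℤ) :
    polyMul p (polyMul q F) m n = ∑ d ∈ p.support, ∑ e ∈ q.support,
      (p.coeff d * q.coeff e) • F (m + d 0 + e 0) (n + d 1 + e 1) := by
  simp only [polyMul_eq_sum p _ m n subset_rfl, polyMul_eq_sum q F _ _ subset_rfl,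
    Finset.smul_sum, smul_smul]

lemma polyMul_comm (p q : MvPolynomial (Fin 2) ℂ) (F : ℤ → ℤ → W) :
    polyMul p (polyMul q F) = polyMul q (polyMul p F) := by
  ext m n
  rw [polyMul_polyMul_eq_sum, polyMul_polyMul_eq_sum, Finset.sum_comm]
  refine Finset.sum_congr rfl fun e _ => Finset.sum_congr rfl fun d _ => ?_
  rw [mul_comm, add_right_comm m, add_right_comm n]

end Series

section Substitution

variable {W : Type} [AddCommGroup W] [Module ℂ W]

/-- `G = Σ G m n x₁^{-m-1} x₂^{-n-1}` lies in `W((x₁⁻¹,x₂⁻¹))`. -/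
def LowerTrunc (G : ℤ → ℤ → W) : Prop := ∃ N : ℤ, ∀ m n : ℤ, (m < N ∨ n < N) → G m n = 0

lemma LowerTrunc.polyMul {G : ℤ → ℤ → W} (h : LowerTrunc G) (p : MvPolynomial (Fin 2) ℂ) :
    LowerTrunc (polyMul p G) := by
  obtain ⟨N, hN⟩ := h
  set B : ℕ := p.support.sup fun d => max (d 0) (d 1)
  refine ⟨N - B, fun m n hmn => ?_⟩
  rw [polyMul_eq_sum p G m n subset_rfl]
  refine Finset.sum_eq_zero fun d hd => ?_
  have hB : max (d 0) (d 1) ≤ B := Finset.le_sup (f := fun d => max (d 0) (d 1)) hd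
  rw [hN (m + d 0) (n + d 1) (by omega), smul_zero]

lemma LowerTrunc.finite_support {G : ℤ → ℤ → W} (h : LowerTrunc G) (c : ℤ → ℂ) (k l : ℤ) :
    (Function.support fun m => c m • G m (l - m + k)).Finite := by
  obtain ⟨N, hN⟩ := h
  refine (Set.finite_Icc N (l + k - N)).subset fun m hm => ?_
  rw [Set.mem_Icc]
  by_contra hmN
  exact hm (by simp only [hN m (l - m + k) (by omega), smul_zero])

lemma substX1_of_nonneg (G : ℤ → ℤ → W) {k : ℤ} (hk : 0 ≤ k) (l : ℤ) : substX1 G k l = 0 :=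
  if_neg (not_lt.mpr hk)

lemma substX1_smul (a : ℂ) {G : ℤ → ℤ → W} (hG : LowerTrunc G) :
    substX1 (a • G) = a • substX1 G := by
  ext k l
  simp only [substX1, Pi.smul_apply]
  split_ifs
  · rw [smul_finsum' a (hG.finite_support _ k l)]
    exact finsum_congr fun m => smul_comm _ _ _
  · rw [smul_zero]

lemma substX1_add {A B : ℤ → ℤ → W} (hA : LowerTrunc A) (hB : LowerTrunc B) :
    substX1 (A + B) = substX1 A + substX1 B := by
  ext k l
  simp only [substX1, Pi.add_apply]
  split_ifs
  · rw [← finsum_add_distrib (hA.finite_support _ k l) (hB.finite_support _ k l)]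
    exact finsum_congr fun m => smul_add _ _ _
  · rw [add_zero]

lemma substX1_shift_snd (H : ℤ → ℤ → W) (k l : ℤ) :
    substX1 (fun m n => H m (n + 1)) k l = substX1 H k (l + 1) := by
  unfold substX1
  refine if_congr Iff.rfl (finsum_congr fun m => ?_) rfl
  rw [show l + 1 - m + k = l - m + k + 1 by ring]

/-- Multiplication by `x₁` becomes multiplication by `x₂ + x₀`; on coefficients this is
Pascal's rule for `binom(-m-1, j)`. -/
lemma substX1_shift_fst {H : ℤ → ℤ → W} (hH : LowerTrunc H) (k l : ℤ) :
    substX1 (fun m n => H (m + 1) n) k l = substX1 H (k + 1) l + substX1 H k (l + 1) := by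
  rcases le_or_gt 0 k with hk | hk
  · rw [substX1_of_nonneg _ hk, substX1_of_nonneg _ hk, substX1_of_nonneg _ (by omega), add_zero]
  obtain ⟨j, rfl⟩ : ∃ j : ℕ, k = -j - 1 := ⟨(-k-1).toNat, by omega⟩
  have hj : (-(-(j:ℤ) - 1) - 1).toNat = j := by omega
  have hreindex : substX1 (fun m n => H (m + 1) n) (-j - 1) l
      = ∑ᶠ m : ℤ, zchoose (-m) j • H m (l - m - j) := by
    rw [substX1, if_pos hk, hj, ← finsum_comp_equiv (Equiv.addRight (1:ℤ))
      (f := fun m => zchoose (-m) j • H m (l - m - j))]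
    refine finsum_congr fun m => ?_
    simp only [Equiv.coe_addRight]
    congr 2 <;> omega
  rw [hreindex]
  cases j with
  | zero =>
    rw [substX1_of_nonneg _ (by omega), zero_add, substX1, if_pos hk, hj]
    refine finsum_congr fun m => ?_
    simp only [zchoose_zero_right]
    congr 2
    omega
  | succ j =>
    rw [substX1, substX1, if_pos (by omega), if_pos hk, hj,
      ← finsum_add_distrib (hH.finite_support _ _ _) (hH.finite_support _ _ _)]
    refine finsum_congr fun m => ?_
    have hpascal := zchoose_succ_succ (-m - 1) j
    rw [sub_add_cancel] at hpascal
    rw [hpascal, add_smul, show (-(-((j + 1 : ℕ) : ℤ) - 1 + 1) - 1).toNat = j by omega,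
      show l - m + (-((j + 1 : ℕ) : ℤ) - 1 + 1) = l - m - (j + 1 : ℕ) by ring,
      show l + 1 - m + (-((j + 1 : ℕ) : ℤ) - 1) = l - m - (j + 1 : ℕ) by ring]

lemma substPoly_C (a : ℂ) : substPoly (C a) = C a := by
  simp [substPoly, algebraMap_eq]

lemma substPoly_add (p q : MvPolynomial (Fin 2) ℂ) :
    substPoly (p + q) = substPoly p + substPoly q :=
  map_add _ p q

lemma substPoly_mul (p q : MvPolynomial (Fin 2) ℂ) :
    substPoly (p * q) = substPoly p * substPoly q :=
  map_mul _ p q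

lemma substPoly_X_zero : substPoly (X 0) = X 0 + X 1 := by
  simp [substPoly]

lemma substPoly_X_one : substPoly (X 1) = X 1 := by
  simp [substPoly]

lemma substPoly_injective : Function.Injective substPoly := by
  have hinv : ∀ p, aeval ![X 0 - X 1, X 1] (substPoly p) = p := by
    intro p
    rw [substPoly, ← AlgHom.comp_apply]
    conv_rhs => rw [← AlgHom.id_apply (R := ℂ) p]
    congr 1
    refine MvPolynomial.algHom_ext fun i => ?_
    rcases fin_two_eq_zero_or_one i with rfl | rfl <;> simp
  exact Function.LeftInverse.injective hinv

lemma substPoly_ne_zero {p : MvPolynomial (Fin 2) ℂ} (hp : p ≠ 0) : substPoly p ≠ 0 :=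
  fun h => hp (substPoly_injective (h.trans (map_zero _).symm))

theorem substX1_polyMul (r : MvPolynomial (Fin 2) ℂ) {G : ℤ → ℤ → W} (hG : LowerTrunc G) :
    substX1 (polyMul r G) = polyMul (substPoly r) (substX1 G) := by
  induction r using MvPolynomial.induction_on with
  | C a => rw [substPoly_C, polyMul_C, polyMul_C, substX1_smul a hG]
  | add p q hp hq =>
    rw [polyMul_add_left, substX1_add (hG.polyMul p) (hG.polyMul q), hp, hq, substPoly_add,
      polyMul_add_left]
  | mul_X p i ih =>
    ext k l
    rcases fin_two_eq_zero_or_one i with rfl | rfl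
    · rw [polyMul_mul_X_zero, substX1_shift_fst (hG.polyMul p), ih, substPoly_mul,
        substPoly_X_zero, mul_add, polyMul_add_left, polyMul_mul_X_zero, polyMul_mul_X_one]
      rfl
    · rw [polyMul_mul_X_one, substX1_shift_snd, ih, substPoly_mul, substPoly_X_one,
        polyMul_mul_X_one]

end Substitution

section IterLaurent

variable {W : Type} [AddCommGroup W]

/-- `D = Σ D k l x₀^{-k-1} x₂^{-l-1}` lies in `W((x₂⁻¹))((x₀))`. -/
def IsIterLaurent (D : ℤ → ℤ → W) : Prop :=
  (∀ᶠ k in atTop, ∀ l, D k l = 0) ∧ ∀ k, ∀ᶠ l in atBot, D k l = 0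

lemma IsIterLaurent.sub {D E : ℤ → ℤ → W} (hD : IsIterLaurent D) (hE : IsIterLaurent E) :
    IsIterLaurent (D - E) :=
  ⟨(hD.1.and hE.1).mono fun k h l => by simp [h.1 l, h.2 l],
   fun k => ((hD.2 k).and (hE.2 k)).mono fun l h => by simp [h.1, h.2]⟩

lemma IsIterLaurent.exists_leading {D : ℤ → ℤ → W} (hD : IsIterLaurent D) (hne : D ≠ 0) :
    ∃ k l, D k l ≠ 0 ∧ (∀ k', k < k' → ∀ l', D k' l' = 0) ∧ ∀ l' < l, D k l' = 0 := by
  classical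
  obtain ⟨K, hK⟩ := eventually_atTop.1 hD.1
  have hsome : ∃ k l, D k l ≠ 0 := by
    by_contra! h
    exact hne (funext₂ h)
  obtain ⟨k, ⟨l₀, hl₀⟩, hkmax⟩ := Int.exists_greatest_of_bdd (P := fun k => ∃ l, D k l ≠ 0)
    ⟨K, fun k ⟨l, hl⟩ => by by_contra! hk; exact hl (hK k hk.le l)⟩ hsome
  obtain ⟨M, hM⟩ := eventually_atBot.1 (hD.2 k)
  obtain ⟨l, hl, hlmin⟩ := Int.exists_least_of_bdd (P := fun l => D k l ≠ 0)
    ⟨M, fun l hl => by by_contra! hlM; exact hl (hM l hlM.le)⟩ ⟨l₀, hl₀⟩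
  exact ⟨k, l, hl, fun k' hk' l' => by_contra fun h => (hkmax k' ⟨l', h⟩).not_gt hk',
    fun l' hl' => by_contra fun h => (hlmin l' h).not_gt hl'⟩

variable [Module ℂ W]

lemma IsIterLaurent.polyMul {D : ℤ → ℤ → W} (hD : IsIterLaurent D)
    (p : MvPolynomial (Fin 2) ℂ) : IsIterLaurent (polyMul p D) := by
  obtain ⟨K, hK⟩ := eventually_atTop.1 hD.1
  refine ⟨eventually_atTop.2 ⟨K, fun k hk l => ?_⟩, fun k => ?_⟩
  · rw [polyMul_eq_sum p D k l subset_rfl]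
    exact Finset.sum_eq_zero fun d _ => by rw [hK _ (by omega), smul_zero]
  · have hterms : ∀ᶠ l in atBot, ∀ d ∈ p.support, D (k + d 0) (l + d 1) = 0 :=
      (eventually_all_finset _).2 fun d _ =>
        (tendsto_atBot_add_const_right _ _ tendsto_id).eventually (hD.2 _)
    filter_upwards [hterms] with l hl
    rw [polyMul_eq_sum p D k l subset_rfl]
    exact Finset.sum_eq_zero fun d hd => by rw [hl d hd, smul_zero]

lemma LowerTrunc.isIterLaurent_substX1 {G : ℤ → ℤ → W} (hG : LowerTrunc G) :
    IsIterLaurent (substX1 G) := by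
  obtain ⟨N, hN⟩ := hG
  refine ⟨eventually_atTop.2 ⟨0, fun k hk l => substX1_of_nonneg G hk l⟩,
    fun k => eventually_atBot.2 ⟨2 * N - k - 1, fun l hl => ?_⟩⟩
  unfold substX1
  split_ifs
  · exact finsum_eq_zero_of_forall_eq_zero fun m => by rw [hN m _ (by omega), smul_zero]
  · rfl

lemma exists_mem_support_leading {r : MvPolynomial (Fin 2) ℂ} (hr : r ≠ 0) :
    ∃ e ∈ r.support, ∀ d ∈ r.support, d ≠ e → e 0 < d 0 ∨ (d 0 = e 0 ∧ d 1 < e 1) := by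
  obtain ⟨e, he, hmin⟩ := r.support.exists_min_image (fun d => toLex ((d 0 : ℤ), -(d 1 : ℤ)))
    (Finset.nonempty_iff_ne_empty.2 (mt support_eq_empty.1 hr))
  refine ⟨e, he, fun d hd hne => ?_⟩
  rcases Prod.Lex.toLex_le_toLex.1 (hmin d hd) with h | ⟨h0, h1⟩
  · exact Or.inl (by simpa using h)
  · refine Or.inr ⟨by omega, lt_of_le_of_ne (by omega) fun h1' => hne ?_⟩
    ext i
    rcases fin_two_eq_zero_or_one i with rfl | rfl <;> omega

theorem IsIterLaurent.eq_zero_of_polyMul_eq_zero {D : ℤ → ℤ → W} (hD : IsIterLaurent D)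
    {r : MvPolynomial (Fin 2) ℂ} (hr : r ≠ 0) (h : _root_.polyMul r D = 0) : D = 0 := by
  by_contra hne
  obtain ⟨k, l, hkl, hright, hbelow⟩ := hD.exists_leading hne
  obtain ⟨e, he, hlead⟩ := exists_mem_support_leading hr
  have hsingle : _root_.polyMul r D (k - e 0) (l - e 1) = r.coeff e • D k l := by
    rw [polyMul_eq_sum r D _ _ subset_rfl, Finset.sum_eq_single_of_mem e he fun d hd hde => ?_,
      sub_add_cancel, sub_add_cancel]
    rcases hlead d hd hde with h0 | ⟨h0, h1⟩
    · rw [hright _ (by omega), smul_zero]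
    · rw [h0, sub_add_cancel, hbelow _ (by omega), smul_zero]
  have hzero := congrFun (congrFun h (k - e 0)) (l - e 1)
  rw [hsingle] at hzero
  exact hkl ((smul_eq_zero.mp hzero).resolve_left (mem_support_iff.mp he))

end IterLaurent

lemma polyMul_substPoly_substX1_sub_eq_zero {W : Type} [AddCommGroup W] [Module ℂ W]
    {p q : MvPolynomial (Fin 2) ℂ} {F c : ℤ → ℤ → W}
    (hp : LowerTrunc (polyMul p F)) (hq : LowerTrunc (polyMul q F))
    (hassoc : substX1 (polyMul q F) = polyMul (substPoly q) c) :
    polyMul (substPoly q) (substX1 (polyMul p F) - polyMul (substPoly p) c) = 0 := by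
  rw [polyMul_sub_right, ← substX1_polyMul q hp, polyMul_comm q p, substX1_polyMul p hq, hassoc,
    polyMul_comm, sub_self]

lemma QModInf.isIterLaurent_Y_Y {V W : Type} [AddCommGroup V] [Module ℂ V] [AddCommGroup W]
    [Module ℂ W] {VA : VertexAlg V} (M : QModInf VA W) (u v : V) (w : W) :
    IsIterLaurent (fun k l => M.Y (VA.Y u k v) l w) := by
  obtain ⟨N, hN⟩ := VA.trunc u v
  refine ⟨eventually_atTop.2 ⟨N, fun k hk l => by simp [hN k hk]⟩, fun k => ?_⟩
  obtain ⟨L, hL⟩ := M.trunc (VA.Y u k v) w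
  exact eventually_atBot.2 ⟨L - 1, fun l hl => hL l (by omega)⟩

theorem weak_assoc_any_polynomial_general {V W : Type}
    [AddCommGroup V] [Module ℂ V] [AddCommGroup W] [Module ℂ W]
    (VA : VertexAlg V) (M : QModInf VA W) (u v : V)
    (p : MvPolynomial (Fin 2) ℂ)
    (hcomp : Compat p (M.Y u) (M.Y v)) :
    AssocEq p (M.Y u) (M.Y v) (fun k l => M.Y (VA.Y u k v) l) := by
  obtain ⟨q, hq, hqcomp, hqassoc⟩ := M.weak_assoc u v
  intro w
  have hdefect : substX1 (polyMul p fun m n => M.Y u m (M.Y v n w))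
      - polyMul (substPoly p) (fun k l => M.Y (VA.Y u k v) l w) = 0 :=
    (LowerTrunc.isIterLaurent_substX1 (hcomp w)).sub ((M.isIterLaurent_Y_Y u v w).polyMul _)
      |>.eq_zero_of_polyMul_eq_zero (substPoly_ne_zero hq)
        (polyMul_substPoly_substX1_sub_eq_zero (hcomp w) (hqcomp w) (funext₂ (hqassoc w)))
  exact fun k l => sub_eq_zero.mp (congrFun (congrFun hdefect k) l)

/-- Remark 2.2: if `(W, Y_W)` is a quasi module at infinity for a vertex
algebra `V` and `u, v ∈ V`, then the weak associativity relation
`(p(x₁,x₂)Y_W(u,x₁)Y_W(v,x₂))|_{x₁=x₂+x₀} = p(x₀+x₂,x₂) Y_W(Y(u,x₀)v, x₂)`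
holds for ANY nonzero polynomial `p(x₁,x₂)` such that
`p(x₁,x₂)Y_W(u,x₁)Y_W(v,x₂) ∈ Hom(W, W((x₁⁻¹,x₂⁻¹)))`. -/
theorem weak_assoc_any_polynomial {V W : Type}
    [AddCommGroup V] [Module ℂ V] [AddCommGroup W] [Module ℂ W]
    (VA : VertexAlg V) (M : QModInf VA W) (u v : V)
    (p : MvPolynomial (Fin 2) ℂ) (hp : p ≠ 0)
    (hcomp : Compat p (M.Y u) (M.Y v)) :
    AssocEq p (M.Y u) (M.Y v) (fun k l => M.Y (VA.Y u k v) l) :=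
  weak_assoc_any_polynomial_general VA M u v p hcomp
end
end

section
/- For any g(x) = αx + β ∈ G (α ∈ ℂ×, β ∈ ℂ), the formal delta function identity x₁⁻¹δ(g(x₂)/x₁) = Φ(g)⁻¹ x₂⁻¹δ(g⁻¹(x₁)/x₂) holds, i.e., Σ_{n∈ℤ} x₁^{−n−1}(αx₂+β)ⁿ = α⁻¹ Σ_{n∈ℤ} x₂^{−n−1}(α⁻¹x₁ − α⁻¹β)ⁿ, where (αx₂+β)ⁿ is expanded as Σ_{i≥0} C(n,i) α^{n−i}β^i x₂^{n−i} ∈ ℂ((x₂⁻¹)) and (α⁻¹x₁−α⁻¹β)ⁿ is expanded analogously in ℂ((x₁⁻¹)). -/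
open MvPolynomial

noncomputable section

/-- The coefficient of `x₁^{a} x₂^{b}` in `x₁⁻¹ δ(g(x₂)/x₁) = Σ_{n∈ℤ} x₁^{-n-1} g(x₂)ⁿ`
for `g(x) = αx + β`, where `g(x₂)ⁿ` is expanded in `ℂ((x₂⁻¹))`. -/
def deltaGCoeff (α β : ℂ) (a b : ℤ) : ℂ :=
  if 0 ≤ -a - 1 - b then
    zchoose (-a-1) (-a-1-b).toNat * α ^ b * β ^ (-a-1-b).toNat
  else 0

lemma zchoose_reflect (n : ℤ) (k : ℕ) :
    zchoose n k = (-1 : ℂ)^k * zchoose ((k : ℤ) - n - 1) k := by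
  unfold zchoose
  rw [← mul_div_assoc]
  congr 1
  rw [show ((-1:ℂ)^k) = ∏ _j ∈ Finset.range k, (-1:ℂ) by simp,
    ← Finset.prod_mul_distrib,
    ← Finset.prod_range_reflect (fun j => ((n:ℂ) - j))]
  apply Finset.prod_congr rfl
  intro j hj
  rw [Finset.mem_range] at hj
  rw [show k - 1 - j = k - (j+1) by omega]
  push_cast [Nat.cast_sub (by omega : j + 1 ≤ k)]
  ring

/-- for `g(x) = αx + β ∈ G`, the formal delta function identity
`x₁⁻¹ δ(g(x₂)/x₁) = Φ(g)⁻¹ x₂⁻¹ δ(g⁻¹(x₁)/x₂)` holds, where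
`g⁻¹(x) = α⁻¹x - α⁻¹β` and `Φ(g) = α`; stated coefficientwise for the
coefficient of `x₁^a x₂^b`. -/
theorem delta_inverse_identity (α β : ℂ) (hα : α ≠ 0) (a b : ℤ) :
    deltaGCoeff α β a b = α⁻¹ * deltaGCoeff α⁻¹ (-α⁻¹ * β) b a := by
  unfold deltaGCoeff
  rw [show -b - 1 - a = -a - 1 - b by ring]
  by_cases hc : 0 ≤ -a - 1 - b
  · rw [if_pos hc, if_pos hc]
    set k := (-a - 1 - b).toNat with hk
    have hkz : (k:ℤ) = -a - 1 - b := Int.toNat_of_nonneg hc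
    have h1 : zchoose (-a-1) k = (-1:ℂ)^k * zchoose (-b-1) k := by
      rw [zchoose_reflect (-a-1) k]
      congr 2
      omega
    rw [h1]
    have h2 : (-α⁻¹ * β)^k = (-1:ℂ)^k * (α⁻¹)^k * β^k := by ring
    rw [h2]
    have hz : α ^ b = α⁻¹ * (α⁻¹) ^ a * (α⁻¹)^k := by
      rw [← zpow_natCast α⁻¹ k, inv_zpow, inv_zpow, ← zpow_neg, ← zpow_neg,
        ← zpow_neg_one, ← zpow_add₀ hα, ← zpow_add₀ hα]
      congr 1
      omega
    rw [hz]
    ring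
  · rw [if_neg hc, if_neg hc, mul_zero]
end
end
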